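/- Suppose real numbers b1 < 0 < b4 and b2 < 0 < b3, and let λ14 = b4/(b4−b1), λ23 = b3/(b3−b2). Suppose a14 := λ14 a1 + (1−λ14) a4 < 0 and a23 := λ23 a2 + (1−λ23) a3 > 0, and set λ14,23 = a23/(a23 − a14). Then λ14,23 ∈ (0,1), and the quantities γ1 = λ14,23 λ14, γ2 = (1−λ14,23) λ23, γ3 = (1−λ14,23)(1−λ23), γ4 = λ14,23(1−λ14) are nonnegative, sum to 1, and satisfy γ1 a1 + γ2 a2 + γ3 a3 + γ4 a4 = 0 and γ1 b1 + γ2 b2 + γ3 b3 + γ4 b4 = 0. -/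

import Mathlib

/-
Each multiplier `q / (q - p)` with `p < 0 < q` is the convex weight that balances `p` against `q`.
Balancing `b1` with `b4` and `b2` with `b3` makes both pairs tangent to the `x`-axis; balancing the
resulting averaged `x`-velocities `a14 < 0 < a23` makes the combination tangent to the `y`-axis too,
and a convex combination of convex combinations is again one.
-/

section BalancingWeight

variable {𝕜 : Type*} [Field 𝕜]

theorem div_sub_mul_add_one_sub_div_sub_mul_eq_zero {p q : 𝕜} (hpq : q - p ≠ 0) :
    q / (q - p) * p + (1 - q / (q - p)) * q = 0 := by
  field_simp
  ring

variable [LinearOrder 𝕜] [IsStrictOrderedRing 𝕜]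

theorem div_sub_mem_Ioo_of_neg_of_pos {p q : 𝕜} (hp : p < 0) (hq : 0 < q) :
    q / (q - p) ∈ Set.Ioo 0 1 := by
  have hqp : 0 < q - p := by linarith
  exact ⟨div_pos hq hqp, (div_lt_one hqp).2 (by linarith)⟩

end BalancingWeight

/-- The `φ → 0` limit of the zero-hysteresis sliding solution (Proposition 3.1):
the combined multiplier `λ14,23` lies in `(0,1)` and the resulting proportions
`γᵢ` are nonnegative, sum to one, and give a sliding vector tangent to both
switching surfaces. -/
theorem stmt5 (a1 b1 a2 b2 a3 b3 a4 b4 : ℝ)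
    (hb1 : b1 < 0) (hb4 : 0 < b4) (hb2 : b2 < 0) (hb3 : 0 < b3)
    (l14 l23 : ℝ) (hl14 : l14 = b4 / (b4 - b1)) (hl23 : l23 = b3 / (b3 - b2))
    (a14 a23 : ℝ) (ha14def : a14 = l14 * a1 + (1 - l14) * a4)
    (ha23def : a23 = l23 * a2 + (1 - l23) * a3)
    (ha14 : a14 < 0) (ha23 : 0 < a23)
    (l1423 : ℝ) (hl1423 : l1423 = a23 / (a23 - a14)) :
    l1423 ∈ Set.Ioo (0:ℝ) 1 ∧
    (0 ≤ l1423 * l14 ∧ 0 ≤ (1 - l1423) * l23 ∧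
      0 ≤ (1 - l1423) * (1 - l23) ∧ 0 ≤ l1423 * (1 - l14)) ∧
    l1423 * l14 + (1 - l1423) * l23 + (1 - l1423) * (1 - l23) + l1423 * (1 - l14) = 1 ∧
    l1423 * l14 * a1 + (1 - l1423) * l23 * a2 + (1 - l1423) * (1 - l23) * a3
      + l1423 * (1 - l14) * a4 = 0 ∧
    l1423 * l14 * b1 + (1 - l1423) * l23 * b2 + (1 - l1423) * (1 - l23) * b3
      + l1423 * (1 - l14) * b4 = 0 := by
  obtain ⟨h14pos, h14lt⟩ : l14 ∈ Set.Ioo 0 1 := hl14 ▸ div_sub_mem_Ioo_of_neg_of_pos hb1 hb4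
  obtain ⟨h23pos, h23lt⟩ : l23 ∈ Set.Ioo 0 1 := hl23 ▸ div_sub_mem_Ioo_of_neg_of_pos hb2 hb3
  have hl1423_mem : l1423 ∈ Set.Ioo 0 1 := hl1423 ▸ div_sub_mem_Ioo_of_neg_of_pos ha14 ha23
  have hb14 : l14 * b1 + (1 - l14) * b4 = 0 :=
    hl14 ▸ div_sub_mul_add_one_sub_div_sub_mul_eq_zero (by linarith)
  have hb23 : l23 * b2 + (1 - l23) * b3 = 0 :=
    hl23 ▸ div_sub_mul_add_one_sub_div_sub_mul_eq_zero (by linarith)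
  have ha : l1423 * a14 + (1 - l1423) * a23 = 0 :=
    hl1423 ▸ div_sub_mul_add_one_sub_div_sub_mul_eq_zero (by linarith)
  have h1423 : 0 ≤ 1 - l1423 := sub_nonneg.2 hl1423_mem.2.le
  refine ⟨hl1423_mem, ⟨?_, ?_, ?_, ?_⟩, by ring, ?_, ?_⟩
  · exact mul_nonneg hl1423_mem.1.le h14pos.le
  · exact mul_nonneg h1423 h23pos.le
  · exact mul_nonneg h1423 (sub_nonneg.2 h23lt.le)
  · exact mul_nonneg hl1423_mem.1.le (sub_nonneg.2 h14lt.le)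
  · linear_combination ha - l1423 * ha14def - (1 - l1423) * ha23def
  · linear_combination l1423 * hb14 + (1 - l1423) * hb23
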